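/- Let χ be an (r+1)-signotope on [n] with block partition [n] = C₁ ∪ ... ∪ C_r and let O_χ be the induced grid orientation on C₁ × ... × C_r. Then every subgrid S = C₁' × ... × C_r' (with ∅ ≠ C_i' ⊆ C_i) contains at most one sink of the induced orientation. -/

import Mathlib

/-- Number of sign changes in a list of signs (`true` = `+`, `false` = `-`). -/
def signChanges (l : List Bool) : Nat :=
  (l.zip l.tail).countP (fun p => p.1 != p.2)

/-- The sequence of signs obtained from the set `A` by applying `χ` to `A` minus each of its
elements, deleted in increasing order. -/
def delSeq (chi : Finset Nat -> Bool) (A : Finset Nat) : List Bool :=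
  (List.range A.card).map (fun i => chi (((A.sort (fun a b => a <= b)).eraseIdx i).toFinset))

/-- `chi` is an `r`-signotope on ground set `S`: it is a sign map on `r`-subsets such that for
every `(r+1)`-subset `A ⊆ S` the sign sequence `delSeq chi A` has at most one sign change. -/
def IsSignotopeOn (r : Nat) (S : Finset Nat) (chi : Finset Nat -> Bool) : Prop :=
  forall A : Finset Nat, A ⊆ S -> A.card = r + 1 -> signChanges (delSeq chi A) <= 1
/-- `C 0, ..., C (r-1)` is a block partition of `[n] = {1, ..., n}`. -/
def IsBlockPartition (n r : Nat) (C : Fin r -> Finset Nat) : Prop :=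
  Finset.univ.biUnion C = Finset.Icc 1 n ∧
    ∀ i j : Fin r, i < j -> ∀ c ∈ C i, ∀ c' ∈ C j, c < c'

/-- The orientation `O_χ` induced by a block signotope: `blockDir chi C v w` means that both `v`
and `w` are grid vertices (of the grid `C 0 × ⋯ × C (r-1)`), they differ in exactly one
coordinate `i`, and the edge between them is directed from `v` to `w` according to the sign of
`chi` on the `(r+1)`-set consisting of all entries of `v` together with `w i`. -/
def blockDir {r : Nat} (chi : Finset Nat -> Bool) (C : Fin r -> Finset Nat)
    (v w : Fin r -> Nat) : Prop :=
  (∀ j, v j ∈ C j) ∧ (∀ j, w j ∈ C j) ∧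
    ∃ i, (∀ j, j ≠ i -> v j = w j) ∧
      ((v i < w i ∧ chi (insert (w i) (Finset.image v Finset.univ)) = true) ∨
       (w i < v i ∧ chi (insert (w i) (Finset.image v Finset.univ)) = false))

/-- Two tuples are adjacent in the grid iff they differ in exactly one coordinate. -/
def NatAdj {r : Nat} (v w : Fin r -> Nat) : Prop :=
  ∃ i, v i ≠ w i ∧ ∀ j, j ≠ i -> v j = w j

/-- `v` is a sink of the subgrid `S` of `O_χ`: all edges of the subgrid at `v` are incoming. -/
def IsBlockSink {r : Nat} (chi : Finset Nat -> Bool) (C : Fin r -> Finset Nat)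
    (S : Fin r -> Finset Nat) (v : Fin r -> Nat) : Prop :=
  (∀ i, v i ∈ S i) ∧ ∀ w, (∀ i, w i ∈ S i) -> NatAdj v w -> blockDir chi C w v

/-!
Let `v ≠ w` be sinks of a subgrid and `q` the first coordinate where they differ, say
`v q < w q`. Then `y := w[q := v q]` agrees with `v` in all coordinates `≤ q`, and the `q`-edge
from `y` up to `w` points into `w` since `w` is a sink. This is impossible: for every vertex `y`
of the subgrid agreeing with a sink `v` in the coordinates `≤ q`, all upward `q`-edges at `y`
point into `y`. That claim is proved by induction on the Hamming distance from `y` to `v`. If it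
failed at `y` with edge value `c`, then for each coordinate `s` with `y s ≠ v s` (so `q < s`),
the induction hypothesis at `y[s := v s]` and the signotope axiom on the `(r+2)`-set
`{c, y s, v s} ∪ y` (where `c` lies in an earlier block) force the edge between `y` and
`y[s := v s]` to point into `y`. So `y` is a second sink of the box spanned by `v` and `y`,
which is excluded by the first argument at that distance.
-/

open Finset Function

lemma signChanges_cons_cons (x y : Bool) (l : List Bool) :
    signChanges (x :: y :: l) = (x != y).toNat + signChanges (y :: l) := by
  simp only [signChanges, List.tail_cons, List.zip_cons_cons, List.countP_cons]
  cases x <;> cases y <;> simp [Nat.add_comm]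

lemma signChanges_cons_le (x b : Bool) (l : List Bool) :
    signChanges (x :: l) ≤ (x != b).toNat + signChanges (b :: l) := by
  cases l with
  | nil => simp [signChanges]
  | cons a t =>
    rw [signChanges_cons_cons, signChanges_cons_cons]
    cases x <;> cases a <;> cases b <;> simp <;> omega

lemma signChanges_cons_le_cons_of_sublist {l₁ l₂ : List Bool} (h : List.Sublist l₁ l₂)
    (x : Bool) : signChanges (x :: l₁) ≤ signChanges (x :: l₂) := by
  induction h generalizing x with
  | slnil => rfl
  | @cons l₁ l₂ b _ ih =>
    calc signChanges (x :: l₁) ≤ (x != b).toNat + signChanges (b :: l₁) :=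
          signChanges_cons_le x b l₁
      _ ≤ (x != b).toNat + signChanges (b :: l₂) := Nat.add_le_add_left (ih b) _
      _ = signChanges (x :: b :: l₂) := (signChanges_cons_cons x b l₂).symm
  | cons_cons a _ ih =>
    rw [signChanges_cons_cons, signChanges_cons_cons]
    exact Nat.add_le_add_left (ih a) _

lemma signChanges_le_of_sublist {l₁ l₂ : List Bool} (h : List.Sublist l₁ l₂) :
    signChanges l₁ ≤ signChanges l₂ := by
  induction h with
  | slnil => rfl
  | @cons _ l₂ b _ ih =>
    refine ih.trans ?_
    cases l₂ with
    | nil => simp [signChanges]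
    | cons a t => rw [signChanges_cons_cons]; omega
  | cons_cons a h => exact signChanges_cons_le_cons_of_sublist h a

lemma delSeq_eq_map (chi : Finset ℕ → Bool) (A : Finset ℕ) :
    delSeq chi A = (A.sort (· ≤ ·)).map (fun a => chi (A.erase a)) := by
  have hnd := A.sort_nodup (· ≤ ·)
  refine List.ext_getElem (by simp [delSeq]) fun i h₁ h₂ => ?_
  have hi : i < (A.sort (· ≤ ·)).length := by simpa [delSeq] using h₁
  simp only [delSeq, List.getElem_map, List.getElem_range, ← hnd.erase_getElem i hi]
  congr 1
  ext a
  simp [hnd.mem_erase_iff, and_comm]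

lemma IsSignotopeOn.chi_erase_eq_or {r n : ℕ} {chi : Finset ℕ → Bool}
    (hchi : IsSignotopeOn (r + 1) (Icc 1 n) chi) {A : Finset ℕ} (hA : A ⊆ Icc 1 n)
    (hcard : #A = r + 2) {x y z : ℕ} (hx : x ∈ A) (hy : y ∈ A) (hz : z ∈ A)
    (hxy : x < y) (hyz : y < z) :
    chi (A.erase x) = chi (A.erase y) ∨ chi (A.erase y) = chi (A.erase z) := by
  have hsub : List.Sublist [x, y, z] (A.sort (· ≤ ·)) :=
    List.sublist_of_subperm_of_sortedLE
      (List.subperm_of_subset (by simp; omega) (by simp [hx, hy, hz]))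
      (by simp [List.sortedLE_iff_pairwise]; omega) (A.sortedLT_sort.sortedLE)
  have := (signChanges_le_of_sublist (hsub.map fun a => chi (A.erase a))).trans
    (delSeq_eq_map chi A ▸ hchi A hA hcard)
  simp only [List.map_cons, List.map_nil] at this
  revert this
  cases chi (A.erase x) <;> cases chi (A.erase y) <;> cases chi (A.erase z) <;> decide

lemma insert_image_update_self {ι α : Type*} [Fintype ι] [DecidableEq ι] [DecidableEq α]
    (x : ι → α) (j : ι) (b : α) :
    insert (x j) (image (update x j b) univ) = insert b (image x univ) := by
  ext a
  simp only [mem_insert, mem_image, mem_univ, true_and]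
  constructor
  · rintro (rfl | ⟨k, rfl⟩)
    · exact Or.inr ⟨j, rfl⟩
    · rcases eq_or_ne k j with rfl | hk
      · simp
      · exact Or.inr ⟨k, (update_of_ne hk b x).symm⟩
  · rintro (rfl | ⟨k, rfl⟩)
    · exact Or.inr ⟨j, by simp⟩
    · rcases eq_or_ne k j with rfl | hk
      · exact Or.inl rfl
      · exact Or.inr ⟨k, update_of_ne hk b x⟩

lemma update_mem_of_mem {ι α : Type*} [DecidableEq ι] {S : ι → Finset α} {x : ι → α}
    (hx : ∀ j, x j ∈ S j) {i : ι} {b : α} (hb : b ∈ S i) (j : ι) : update x i b j ∈ S j := by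
  rcases eq_or_ne j i with rfl | hj <;> simp [*]

lemma hammingDist_update_lt {ι α : Type*} [Fintype ι] [DecidableEq ι] [DecidableEq α]
    {x y : ι → α} {i : ι} (h : x i ≠ y i) :
    hammingDist (update x i (y i)) y < hammingDist x y := by
  refine card_lt_card ⟨fun j => ?_, fun hsub => ?_⟩
  · rcases eq_or_ne j i with rfl | hj <;> simp_all
  · simpa using hsub (mem_filter.2 ⟨mem_univ i, h⟩)

section BlockGrid

variable {n r : ℕ} {chi : Finset ℕ → Bool} {C : Fin r → Finset ℕ}

namespace IsBlockPartition

lemma subset_Icc (hC : IsBlockPartition n r C) (i : Fin r) : C i ⊆ Icc 1 n :=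
  hC.1 ▸ subset_biUnion_of_mem C (mem_univ i)

lemma ne_of_mem (hC : IsBlockPartition n r C) {i j : Fin r} (hij : i ≠ j) {a b : ℕ}
    (ha : a ∈ C i) (hb : b ∈ C j) : a ≠ b := by
  rcases hij.lt_or_gt with h | h
  · exact (hC.2 i j h a ha b hb).ne
  · exact (hC.2 j i h b hb a ha).ne'

lemma injective (hC : IsBlockPartition n r C) {x : Fin r → ℕ} (hx : ∀ j, x j ∈ C j) :
    Injective x := fun i j hij => by_contra fun hne => hC.ne_of_mem hne (hx i) (hx j) hij

lemma notMem_image (hC : IsBlockPartition n r C) {x : Fin r → ℕ} (hx : ∀ j, x j ∈ C j)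
    {t : Fin r} {b : ℕ} (hb : b ∈ C t) (hbx : b ≠ x t) : b ∉ image x univ := by
  simp only [mem_image, mem_univ, true_and, not_exists]
  intro k hk
  rcases eq_or_ne k t with rfl | hkt
  · exact hbx hk.symm
  · exact hC.ne_of_mem hkt (hx k) hb hk

end IsBlockPartition

/-- The signotope axiom on `{c} ∪ u ∪ {b}`, deleting `c < u t < b` in turn. -/
lemma chi_insert_update_or (hchi : IsSignotopeOn (r + 1) (Icc 1 n) chi)
    (hC : IsBlockPartition n r C)
    {p t : Fin r} (hpt : p < t) {u : Fin r → ℕ} (hu : ∀ j, u j ∈ C j) {c b : ℕ}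
    (hc : c ∈ C p) (hcu : c ≠ u p) (hb : b ∈ C t) (hub : u t < b) :
    chi (insert b (image u univ)) = chi (insert c (image (update u t b) univ)) ∨
      chi (insert c (image (update u t b) univ)) = chi (insert c (image u univ)) := by
  set A := insert c (insert b (image u univ))
  have hcb : c ∉ insert b (image u univ) := by
    rw [mem_insert, not_or]
    exact ⟨hC.ne_of_mem hpt.ne hc hb, hC.notMem_image hu hc hcu⟩
  have hbu : b ∉ image u univ := hC.notMem_image hu hb hub.ne'
  have hcard : #A = r + 2 := by
    rw [card_insert_of_notMem hcb, card_insert_of_notMem hbu,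
      card_image_of_injective _ (hC.injective hu), card_univ, Fintype.card_fin]
  have hA : A ⊆ Icc 1 n := by
    simp only [A, insert_subset_iff, image_subset_iff, mem_univ, forall_const]
    exact ⟨hC.subset_Icc p hc, hC.subset_Icc t hb, fun j => hC.subset_Icc j (hu j)⟩
  have hut : u t ∉ insert c (image (update u t b) univ) := by
    rw [mem_insert, not_or]
    exact ⟨(hC.ne_of_mem hpt.ne hc (hu t)).symm,
      hC.notMem_image (update_mem_of_mem hu hb) (hu t) (by simpa using hub.ne)⟩
  have hA_erase_ut : A.erase (u t) = insert c (image (update u t b) univ) := by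
    rw [← erase_insert hut, insert_comm, insert_image_update_self]
  have hcmem : c ∈ A := mem_insert_self _ _
  have hutmem : u t ∈ A := by simp [A]
  have hbmem : b ∈ A := by simp [A]
  have := hchi.chi_erase_eq_or hA hcard hcmem hutmem hbmem
    (hC.2 p t hpt c hc (u t) (hu t)) hub
  have hA_erase_b : A.erase b = insert c (image u univ) := by
    rw [erase_insert_of_ne (hC.ne_of_mem hpt.ne hc hb), erase_insert hbu]
  rwa [hA_erase_ut, erase_insert hcb, hA_erase_b] at this

/-- If the `q`-edge from `x` to `c` leaves `x` while the one from `x[s := b]` to `c` enters it,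
then the `s`-edge between `x` and `x[s := b]` enters `x`. -/
lemma chi_insert_eq_decide_of_flip (hchi : IsSignotopeOn (r + 1) (Icc 1 n) chi)
    (hC : IsBlockPartition n r C) {q s : Fin r} (hqs : q < s) {x : Fin r → ℕ}
    (hx : ∀ j, x j ∈ C j) {c b : ℕ} (hc : c ∈ C q) (hcx : c ≠ x q) (hb : b ∈ C s)
    (hbx : b ≠ x s) (hx_true : chi (insert c (image x univ)) = true)
    (hflip_false : chi (insert c (image (update x s b) univ)) = false) :
    chi (insert b (image x univ)) = decide (b < x s) := by
  rcases hbx.lt_or_gt with hlt | hlt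
  · have := chi_insert_update_or hchi hC hqs (update_mem_of_mem hx hb) hc
      (by simpa [hqs.ne] using hcx) (hx s) (by simpa using hlt)
    simp only [update_idem, update_eq_self, insert_image_update_self] at this
    simpa [hx_true, hflip_false, hlt] using this
  · have := chi_insert_update_or hchi hC hqs hx hc hcx hb hlt
    simpa [hx_true, hflip_false, hlt.not_gt] using this

lemma isBlockSink_iff {S : Fin r → Finset ℕ} (hSC : ∀ i, S i ⊆ C i) {v : Fin r → ℕ} :
    IsBlockSink chi C S v ↔ (∀ i, v i ∈ S i) ∧
      ∀ i, ∀ b ∈ S i, b ≠ v i → chi (insert b (image v univ)) = decide (b < v i) := by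
  refine ⟨fun ⟨hvS, hin⟩ => ⟨hvS, fun i b hb hbv => ?_⟩, fun ⟨hvS, hchiv⟩ => ⟨hvS, ?_⟩⟩
  · obtain ⟨-, -, k, hk, hdir⟩ :=
      hin _ (update_mem_of_mem hvS hb) ⟨i, by simpa using hbv.symm, fun j hj => by simp [hj]⟩
    obtain rfl : k = i := by
      by_contra hki
      rcases hdir with ⟨h, -⟩ | ⟨h, -⟩ <;> simp [hki] at h
    simp only [update_self, insert_image_update_self] at hdir
    rcases hdir with ⟨hlt, h⟩ | ⟨hlt, h⟩ <;> simp [h, hlt, hlt.not_gt]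
  · rintro w hw ⟨i, hne, hagree⟩
    have hw_eq : w = update v i (w i) := by
      funext j
      rcases eq_or_ne j i with rfl | hj
      · simp
      · simp [hj, hagree j hj]
    refine ⟨fun j => hSC j (hw j), fun j => hSC j (hvS j), i, fun j hj => (hagree j hj).symm, ?_⟩
    rw [hw_eq, update_self, insert_image_update_self, hchiv i (w i) (hw i) hne.symm]
    rcases hne.lt_or_gt with hlt | hlt <;> simp [hlt, hlt.not_gt]

lemma IsBlockSink.mono {S T : Fin r → Finset ℕ} {v : Fin r → ℕ} (hv : IsBlockSink chi C S v)
    (hTS : ∀ i, T i ⊆ S i) (hvT : ∀ i, v i ∈ T i) : IsBlockSink chi C T v :=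
  ⟨hvT, fun w hw hadj => hv.2 w (fun i => hTS i (hw i)) hadj⟩

/-- `chi (insert c (image y univ)) = false` with `y q < c` says that the `q`-edge from `y` to
`y[q := c]` enters `y`. -/
def UpEdgesIntoSinkSlice (chi : Finset ℕ → Bool) (C : Fin r → Finset ℕ) (d : ℕ) : Prop :=
  ∀ S : Fin r → Finset ℕ, (∀ i, S i ⊆ C i) → ∀ v, IsBlockSink chi C S v →
    ∀ y : Fin r → ℕ, (∀ i, y i ∈ S i) → hammingDist y v < d → ∀ q, (∀ j ≤ q, y j = v j) →
      ∀ c ∈ S q, v q < c → chi (insert c (image y univ)) = false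

lemma IsBlockSink.eq_of_hammingDist_le {d : ℕ} (hP : UpEdgesIntoSinkSlice chi C d)
    {S : Fin r → Finset ℕ} (hSC : ∀ i, S i ⊆ C i) {v w : Fin r → ℕ}
    (hv : IsBlockSink chi C S v) (hw : IsBlockSink chi C S w) (hvw : hammingDist v w ≤ d) :
    v = w := by
  by_contra hne
  obtain ⟨q, hq, hmin⟩ := wellFounded_lt.has_min {j | v j ≠ w j} (ne_iff.1 hne)
  replace hmin : ∀ j < q, v j = w j := fun j hj => by_contra fun h => hmin j h hj
  wlog hlt : v q < w q generalizing v w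
  · exact this hw hv (hammingDist_comm v w ▸ hvw) (Ne.symm hne) (Ne.symm hq)
      (fun j hj => (hmin j hj).symm) ((Ne.symm hq).lt_of_le (not_lt.1 hlt))
  have hvS := ((isBlockSink_iff hSC).1 hv).1
  obtain ⟨hwS, hw_chi⟩ := (isBlockSink_iff hSC).1 hw
  have hdown := hP S hSC v hv (update w q (v q)) (update_mem_of_mem hwS (hvS q))
    ((hammingDist_update_lt (Ne.symm hq)).trans_le (hammingDist_comm v w ▸ hvw)) q
    (fun j hj => by
      rcases hj.lt_or_eq with hj | rfl
      · simp [hj.ne, hmin j hj]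
      · simp)
    (w q) (hwS q) hlt
  rw [insert_image_update_self, hw_chi q (v q) (hvS q) hq] at hdown
  simp [hlt] at hdown

lemma UpEdgesIntoSinkSlice.succ (hchi : IsSignotopeOn (r + 1) (Icc 1 n) chi)
    (hC : IsBlockPartition n r C) {d : ℕ} (hP : UpEdgesIntoSinkSlice chi C d) :
    UpEdgesIntoSinkSlice chi C (d + 1) := by
  intro S hSC v hv y hyS hyv q hyq c hc hvc
  by_contra hy_true
  rw [Bool.not_eq_false] at hy_true
  obtain ⟨hvS, hv_chi⟩ := (isBlockSink_iff hSC).1 hv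
  set T : Fin r → Finset ℕ := fun j => {v j, y j}
  have hTS : ∀ j, T j ⊆ S j := fun j => insert_subset (hvS j) (singleton_subset_iff.2 (hyS j))
  have hTC : ∀ j, T j ⊆ C j := fun j => (hTS j).trans (hSC j)
  have hvT : IsBlockSink chi C T v := hv.mono hTS fun j => mem_insert_self _ _
  have hyT : IsBlockSink chi C T y := by
    refine (isBlockSink_iff hTC).2 ⟨fun j => by simp [T], fun i b hb hby => ?_⟩
    obtain rfl : b = v i := by simpa [T, hby] using hb
    have hqi : q < i := lt_of_not_ge fun hiq => hby (hyq i hiq).symm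
    have hflip_false := hP S hSC v hv _ (update_mem_of_mem hyS (hvS i))
      ((hammingDist_update_lt (Ne.symm hby)).trans_le (by omega)) q
      (fun j hj => by simp [(hj.trans_lt hqi).ne, hyq j hj]) c hc hvc
    exact chi_insert_eq_decide_of_flip hchi hC hqi (fun j => hSC j (hyS j)) (hSC q hc)
      (hyq q le_rfl ▸ hvc.ne') (hSC i (hvS i)) hby hy_true hflip_false
  obtain rfl := hvT.eq_of_hammingDist_le hP hTC hyT (by rw [hammingDist_comm]; omega)
  simp [hv_chi q c hc hvc.ne', hvc.not_gt] at hy_true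

lemma upEdgesIntoSinkSlice (hchi : IsSignotopeOn (r + 1) (Icc 1 n) chi)
    (hC : IsBlockPartition n r C) (d : ℕ) : UpEdgesIntoSinkSlice chi C d := by
  induction d with
  | zero => intro _ _ _ _ _ _ h; exact absurd h (Nat.not_lt_zero _)
  | succ d ih => exact ih.succ hchi hC

end BlockGrid

theorem subgrid_at_most_one_sink_general (n r : Nat) (chi : Finset Nat -> Bool)
    (C : Fin r -> Finset Nat) (hchi : IsSignotopeOn (r + 1) (Finset.Icc 1 n) chi)
    (hC : IsBlockPartition n r C)
    (S : Fin r -> Finset Nat) (hS : ∀ i, S i ⊆ C i) :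
    ∀ v w : Fin r -> Nat,
      IsBlockSink chi C S v -> IsBlockSink chi C S w -> v = w := fun _ _ hv hw =>
  hv.eq_of_hammingDist_le (upEdgesIntoSinkSlice hchi hC r) hS hw
    (hammingDist_le_card_fintype.trans_eq (Fintype.card_fin r))

/-- every subgrid `S` (with `∅ ≠ S i ⊆ C i`) of the orientation `O_χ` induced by a
block signotope contains at most one sink. -/
theorem subgrid_at_most_one_sink (n r : Nat) (chi : Finset Nat -> Bool)
    (C : Fin r -> Finset Nat) (hchi : IsSignotopeOn (r + 1) (Finset.Icc 1 n) chi)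
    (hC : IsBlockPartition n r C)
    (S : Fin r -> Finset Nat) (hS : ∀ i, S i ⊆ C i) (hne : ∀ i, (S i).Nonempty) :
    ∀ v w : Fin r -> Nat,
      IsBlockSink chi C S v -> IsBlockSink chi C S w -> v = w :=
  subgrid_at_most_one_sink_general n r chi C hchi hC S hS
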